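/- arXiv:1506.01749 — 2 statements merged into one kernel-verified Lean document; each statement's English description precedes it below -/
import Mathlib

section
/- Let G be a connected finite graph, let B be a branch of G, and let s be any vertex of G. Then for every nonnegative integer d, at most three vertices of B are at shortest-path distance exactly d from s in G. -/
/-!
Write `x₀, …, xₙ` for the vertices of the branch and `f i = dist s xᵢ`. Interior vertices have
degree two, so if `s` is not interior, a shortest path from `s` to `xᵢ` enters the branch through
an end; hence `f i = min (i + f 0) (n - i + f n)` and each level set of `f` has at most two
indices. If `s = xₘ` is interior, the same holds on the halves `[0, m]` and `[m, n]`, giving four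
candidates; but `s` cannot reach both ends more cheaply by going around through the other end, so
`f 0 = m` or `f n = n - m`, and one candidate disappears.
-/

open SimpleGraph

variable {V : Type*}

/-- A walk is *branch-like* if it is a path or a cycle and every internal vertex
(vertex other than the endpoints) has degree two in `G`. -/
def IsBranchLike (G : SimpleGraph V) {u v : V} (W : G.Walk u v) : Prop :=
  (W.IsPath ∨ ∃ h : v = u, (W.copy rfl h).IsCycle) ∧
  ∀ x ∈ W.support, x ≠ u → x ≠ v → (G.neighborSet x).ncard = 2

/-- A *branch* of `G` is a maximal branch-like walk (maximal with respect to
containment of edges). -/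
def IsBranch (G : SimpleGraph V) {u v : V} (W : G.Walk u v) : Prop :=
  IsBranchLike G W ∧
  ∀ (u' v' : V) (W' : G.Walk u' v'), IsBranchLike G W' →
    (∀ e ∈ W.edges, e ∈ W'.edges) → (∀ e ∈ W'.edges, e ∈ W.edges)

/-- The branches of `G`, identified by their edge sets. -/
def branchSet (G : SimpleGraph V) : Set (Set (Sym2 V)) :=
  {E | ∃ (u v : V) (W : G.Walk u v), IsBranch G W ∧ E = {e | e ∈ W.edges}}

/-- The number of branches of `G`. -/
noncomputable def branchCount (G : SimpleGraph V) : ℕ := (branchSet G).ncard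

/-- The number of leaves (degree-one vertices) of a graph. -/
noncomputable def leafCount (T : SimpleGraph V) : ℕ :=
  {v : V | (T.neighborSet v).ncard = 1}.ncard

/-- The max leaf number of `G`: the maximum number of leaves over all spanning
trees of `G`. -/
noncomputable def maxLeafNumber (G : SimpleGraph V) : ℕ :=
  sSup {k | ∃ T : SimpleGraph V, T ≤ G ∧ T.IsTree ∧ k = leafCount T}

/-- The indistinct set for a vertex `s` and two branches `A`, `B`: pairs of
distinct vertices, one from each branch, that `s` fails to distinguish. -/
def indistinctSet (G : SimpleGraph V) (s : V) {a₁ a₂ b₁ b₂ : V}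
    (A : G.Walk a₁ a₂) (B : G.Walk b₁ b₂) : Set (V × V) :=
  {p : V × V | p.1 ∈ A.support ∧ p.2 ∈ B.support ∧ p.1 ≠ p.2 ∧
    G.dist s p.1 = G.dist s p.2}

/-- A locating set for `G`. -/
def IsLocatingSet (G : SimpleGraph V) (S : Set V) : Prop :=
  ∀ u v : V, u ≠ v → ∃ w ∈ S, G.dist u w ≠ G.dist v w

/-- The metric dimension of `G`: minimum cardinality of a locating set. -/
noncomputable def metricDim (G : SimpleGraph V) : ℕ :=
  sInf {k | ∃ S : Set V, IsLocatingSet G S ∧ S.ncard = k}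

open Finset

namespace SimpleGraph

variable {G : SimpleGraph V}

theorem Walk.dist_getVert_add_le (hG : G.Connected) {u v : V} (W : G.Walk u v) (i k : ℕ) :
    G.dist (W.getVert i) (W.getVert (i + k)) ≤ k := by
  induction k with
  | zero => simp
  | succ k ih =>
    have hstep : G.dist (W.getVert (i + k)) (W.getVert (i + k + 1)) ≤ 1 := by
      rcases lt_or_ge (i + k) W.length with h | h
      · simpa using dist_le (W.adj_getVert_succ h).toWalk
      · simp [W.getVert_of_length_le h, W.getVert_of_length_le (h.trans (Nat.le_succ _))]
    have := hG.dist_triangle (u := W.getVert i) (v := W.getVert (i + k))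
      (w := W.getVert (i + k + 1))
    rw [← add_assoc]
    omega

/-- A walk from an inner vertex `x j` of the chain `x lo, …, x hi` to a vertex off its interior
has to leave through `x lo` or `x hi`. -/
theorem min_add_dist_le_length {x : ℕ → V} {lo hi : ℕ} {y : V}
    (hnbr : ∀ k, lo < k → k < hi → ∀ c, G.Adj (x k) c → c = x (k - 1) ∨ c = x (k + 1))
    (hy : ∀ k, lo < k → k < hi → x k ≠ y) {a : V} (Q : G.Walk a y) {j : ℕ}
    (hlo : lo < j) (hhi : j < hi) (ha : a = x j) :
    min (j - lo + G.dist (x lo) y) (hi - j + G.dist (x hi) y) ≤ Q.length := by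
  induction Q generalizing j with
  | nil => exact absurd ha.symm (hy j hlo hhi)
  | @cons a b _ hab P ih =>
    rw [Walk.length_cons]
    rcases hnbr j hlo hhi b (ha ▸ hab) with rfl | rfl
    · by_cases hj : j - 1 = lo
      · subst hj
        have := dist_le P
        omega
      · have := ih hy (j := j - 1) (by omega) (by omega) rfl
        omega
    · by_cases hj : j + 1 = hi
      · subst hj
        have := dist_le P
        omega
      · have := ih hy (j := j + 1) (by omega) (by omega) rfl
        omega

theorem Walk.dist_getVert_eq_min (hG : G.Connected) {u v y : V} (W : G.Walk u v) {lo hi : ℕ}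
    (hnbr : ∀ k, lo < k → k < hi → ∀ c, G.Adj (W.getVert k) c →
      c = W.getVert (k - 1) ∨ c = W.getVert (k + 1))
    (hy : ∀ k, lo < k → k < hi → W.getVert k ≠ y) {i : ℕ} (hlo : lo ≤ i) (hhi : i ≤ hi) :
    G.dist y (W.getVert i) =
      min (i - lo + G.dist y (W.getVert lo)) (hi - i + G.dist y (W.getVert hi)) := by
  apply le_antisymm
  · have hl := W.dist_getVert_add_le hG lo (i - lo)
    have hr := W.dist_getVert_add_le hG i (hi - i)
    rw [Nat.add_sub_cancel' hlo] at hl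
    rw [Nat.add_sub_cancel' hhi, dist_comm] at hr
    have := hG.dist_triangle (u := y) (v := W.getVert lo) (w := W.getVert i)
    have := hG.dist_triangle (u := y) (v := W.getVert hi) (w := W.getVert i)
    omega
  · rcases hlo.eq_or_lt with rfl | hlo
    · exact min_le_of_left_le (by simp)
    rcases hhi.eq_or_lt with rfl | hhi
    · exact min_le_of_right_le (by simp)
    obtain ⟨Q, hQ⟩ := hG.exists_walk_length_eq_dist (W.getVert i) y
    simpa only [dist_comm (u := y), ← hQ] using min_add_dist_le_length hnbr hy Q hlo hhi rfl

theorem Walk.ncard_support_filter_le {u v : V} (W : G.Walk u v) (p : V → Prop)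
    [DecidablePred p] :
    {x | x ∈ W.support ∧ p x}.ncard ≤ #{i ∈ range (W.length + 1) | p (W.getVert i)} := by
  classical
  have hsub : {x | x ∈ W.support ∧ p x} ⊆
      ↑({i ∈ range (W.length + 1) | p (W.getVert i)}.image W.getVert) := by
    rintro x ⟨hx, hpx⟩
    obtain ⟨i, rfl, hi⟩ := Walk.mem_support_iff_exists_getVert.mp hx
    simp only [coe_image, coe_filter, mem_range]
    exact ⟨i, ⟨by omega, hpx⟩, rfl⟩
  calc {x | x ∈ W.support ∧ p x}.ncard
      ≤ (↑({i ∈ range (W.length + 1) | p (W.getVert i)}.image W.getVert) : Set V).ncard :=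
        Set.ncard_le_ncard hsub (finite_toSet _)
    _ ≤ _ := by
        rw [Set.ncard_coe_finset]
        exact card_image_le

end SimpleGraph

namespace IsBranchLike

variable {G : SimpleGraph V} {u v : V} {W : G.Walk u v}

theorem eq_of_getVert_eq (hW : IsBranchLike G W) {i j : ℕ} (hi0 : 0 < i) (hin : i < W.length)
    (hj : j ≤ W.length) (h : W.getVert i = W.getVert j) : i = j := by
  rcases hW.1 with hp | ⟨rfl, hc⟩
  · exact hp.getVert_injOn (by simp; omega) (by simpa using hj) h
  · rw [Walk.copy_rfl_rfl] at hc
    rcases j.eq_zero_or_pos with rfl | hj0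
    · have := (hc.getVert_endpoint_iff hin.le).mp (by simpa using h)
      omega
    · exact hc.getVert_injOn (by simp; omega) (by simp; omega) h

theorem getVert_pred_ne_succ (hW : IsBranchLike G W) {k : ℕ} (hk : 0 < k) (hkn : k < W.length) :
    W.getVert (k - 1) ≠ W.getVert (k + 1) := by
  rcases hW.1 with hp | ⟨rfl, hc⟩
  · intro h
    have := hp.getVert_injOn (by simp; omega) (by simp; omega) h
    omega
  · rw [Walk.copy_rfl_rfl] at hc
    exact hc.getVert_sub_one_ne_getVert_add_one hkn.le

theorem eq_getVert_of_adj (hW : IsBranchLike G W) {k : ℕ} (hk : 0 < k) (hkn : k < W.length)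
    {c : V} (hc : G.Adj (W.getVert k) c) : c = W.getVert (k - 1) ∨ c = W.getVert (k + 1) := by
  have hdeg : (G.neighborSet (W.getVert k)).ncard = 2 := by
    refine hW.2 _ (W.getVert_mem_support k) (fun h => ?_) (fun h => ?_)
    · have := hW.eq_of_getVert_eq hk hkn (Nat.zero_le _) (h.trans W.getVert_zero.symm)
      omega
    · have := hW.eq_of_getVert_eq hk hkn le_rfl (h.trans W.getVert_length.symm)
      omega
  have hsub : {W.getVert (k - 1), W.getVert (k + 1)} ⊆ G.neighborSet (W.getVert k) := by
    rintro y (rfl | rfl)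
    · simpa [Nat.sub_add_cancel hk] using (W.adj_getVert_succ (i := k - 1) (by omega)).symm
    · exact W.adj_getVert_succ hkn
  have heq := Set.eq_of_subset_of_ncard_le hsub
    (by rw [hdeg, Set.ncard_pair (hW.getVert_pred_ne_succ hk hkn)])
    (Set.finite_of_ncard_pos (by omega))
  have hc' : c ∈ G.neighborSet (W.getVert k) := hc
  rwa [← heq, Set.mem_insert_iff, Set.mem_singleton_iff] at hc'

theorem getVert_ne (hW : IsBranchLike G W) {j k : ℕ} (hk0 : 0 < k) (hkn : k < W.length)
    (hj : j ≤ W.length) (hkj : k ≠ j) : W.getVert k ≠ W.getVert j :=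
  fun h => hkj (hW.eq_of_getVert_eq hk0 hkn hj h)

theorem dist_getVert_eq_min (hW : IsBranchLike G W) (hG : G.Connected) {y : V} {lo hi : ℕ}
    (hhi : hi ≤ W.length) (hy : ∀ k, lo < k → k < hi → W.getVert k ≠ y) {i : ℕ}
    (hloi : lo ≤ i) (hihi : i ≤ hi) :
    G.dist y (W.getVert i) =
      min (i - lo + G.dist y (W.getVert lo)) (hi - i + G.dist y (W.getVert hi)) :=
  W.dist_getVert_eq_min hG (fun _ hk hkhi _ => hW.eq_getVert_of_adj (by omega) (by omega)) hy
    hloi hihi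

theorem dist_getVert_getVert_eq_min (hW : IsBranchLike G W) (hG : G.Connected) {j lo hi : ℕ}
    (hj : j ≤ W.length) (hjlh : j ≤ lo ∨ hi ≤ j) (hhi : hi ≤ W.length) {i : ℕ}
    (hloi : lo ≤ i) (hihi : i ≤ hi) :
    G.dist (W.getVert j) (W.getVert i) = min (i - lo + G.dist (W.getVert j) (W.getVert lo))
      (hi - i + G.dist (W.getVert j) (W.getVert hi)) :=
  hW.dist_getVert_eq_min hG hhi
    (fun _ hk hkhi => hW.getVert_ne (by omega) (by omega) hj (by omega)) hloi hihi

theorem card_filter_dist_getVert_le_two (hW : IsBranchLike G W) (hG : G.Connected) {s : V}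
    (hs : ∀ k, 0 < k → k < W.length → W.getVert k ≠ s) (d : ℕ) :
    #{i ∈ range (W.length + 1) | G.dist s (W.getVert i) = d} ≤ 2 := by
  refine (card_le_card fun i hi => ?_).trans
    (card_le_two (a := d - G.dist s u) (b := W.length + G.dist s v - d))
  rw [mem_filter, mem_range] at hi
  rw [mem_insert, mem_singleton]
  have := hW.dist_getVert_eq_min hG le_rfl hs (Nat.zero_le i) (by omega)
  simp only [Walk.getVert_zero, Walk.getVert_length, Nat.sub_zero] at this
  omega

theorem card_filter_dist_getVert_le_three_of_interior (hW : IsBranchLike G W)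
    (hG : G.Connected) {m : ℕ} (hm0 : 0 < m) (hmn : m < W.length) (d : ℕ) :
    #{i ∈ range (W.length + 1) | G.dist (W.getVert m) (W.getVert i) = d} ≤ 3 := by
  have hleft : ∀ i ≤ m, G.dist (W.getVert m) (W.getVert i) =
      min (i + G.dist (W.getVert m) u) (m - i) := fun i hi => by
    simpa using hW.dist_getVert_getVert_eq_min hG hmn.le (.inr le_rfl) hmn.le (Nat.zero_le i) hi
  have hright : ∀ i, m ≤ i → i ≤ W.length → G.dist (W.getVert m) (W.getVert i) =
      min (i - m) (W.length - i + G.dist (W.getVert m) v) := fun i hi hin => by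
    simpa using hW.dist_getVert_getVert_eq_min hG hmn.le (.inl le_rfl) le_rfl hi hin
  have hends : G.dist (W.getVert m) u = m ∨ G.dist (W.getVert m) v = W.length - m := by
    have hmu := hW.dist_getVert_getVert_eq_min hG (Nat.zero_le _) (.inl le_rfl) le_rfl
      hm0.le hmn.le
    have hmv := hW.dist_getVert_getVert_eq_min hG le_rfl (.inr le_rfl) le_rfl hm0.le hmn.le
    simp only [Walk.getVert_zero, Walk.getVert_length, dist_self, Nat.sub_zero, add_zero]
      at hmu hmv
    rw [dist_comm] at hmu hmv
    rw [dist_comm (u := v)] at hmv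
    omega
  have hlevel : ∀ i ∈ {i ∈ range (W.length + 1) | G.dist (W.getVert m) (W.getVert i) = d},
      (i ≤ m ∧ d = min (i + G.dist (W.getVert m) u) (m - i)) ∨
      (m ≤ i ∧ i ≤ W.length ∧ d = min (i - m) (W.length - i + G.dist (W.getVert m) v)) := by
    intro i hi
    rw [mem_filter, mem_range] at hi
    rcases le_total i m with him | him
    · exact .inl ⟨him, hi.2 ▸ hleft i him⟩
    · exact .inr ⟨him, by omega, hi.2 ▸ hright i him (by omega)⟩
  rcases hends with h | h
  · refine (card_le_card fun i hi => ?_).trans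
      (card_le_three (a := m - d) (b := m + d) (c := W.length + G.dist (W.getVert m) v - d))
    have := hlevel i hi
    rw [mem_insert, mem_insert, mem_singleton]
    omega
  · refine (card_le_card fun i hi => ?_).trans
      (card_le_three (a := d - G.dist (W.getVert m) u) (b := m - d) (c := m + d))
    have := hlevel i hi
    rw [mem_insert, mem_insert, mem_singleton]
    omega

theorem card_filter_dist_getVert_le_three (hW : IsBranchLike G W) (hG : G.Connected) (s : V)
    (d : ℕ) : #{i ∈ range (W.length + 1) | G.dist s (W.getVert i) = d} ≤ 3 := by
  by_cases! hs : ∃ m, 0 < m ∧ m < W.length ∧ W.getVert m = s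
  · obtain ⟨m, hm0, hmn, rfl⟩ := hs
    exact hW.card_filter_dist_getVert_le_three_of_interior hG hm0 hmn d
  · exact (hW.card_filter_dist_getVert_le_two hG hs d).trans (by norm_num)

end IsBranchLike

theorem branch_at_most_three_at_distance_general (V : Type)
    (G : SimpleGraph V) (hG : G.Connected) (u v : V) (W : G.Walk u v)
    (hW : IsBranch G W) (s : V) (d : ℕ) :
    {x : V | x ∈ W.support ∧ G.dist s x = d}.ncard ≤ 3 :=
  (W.ncard_support_filter_le _).trans (hW.1.card_filter_dist_getVert_le_three hG s d)

/-- For any branch `B` of a connected finite graph `G`, any vertex `s`, and any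
distance `d`, at most three vertices of `B` are at distance exactly `d` from `s`. -/
theorem branch_at_most_three_at_distance (V : Type) [Fintype V]
    (G : SimpleGraph V) (hG : G.Connected) (u v : V) (W : G.Walk u v)
    (hW : IsBranch G W) (s : V) (d : ℕ) :
    {x : V | x ∈ W.support ∧ G.dist s x = d}.ncard ≤ 3 :=
  branch_at_most_three_at_distance_general V G hG u v W hW s d
end

section
/- There exists a constant c > 0 such that for every connected finite graph G, every two branches A and B of G (possibly A = B), and every vertex s of G, the indistinct set for s, A, and B has cardinality at most c · min(|A|, |B|), where |A| and |B| denote the numbers of vertices of A and B. -/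
/-!
Along a branch, an internal vertex is adjacent in `G` only to its two neighbours on the branch,
and unless it is `s` one of them is closer to `s`. So the distance to `s`, read along the branch,
has no interior local minimum except at the (at most one) internal occurrence of `s`; on either
side of that point it takes each value at most twice, hence at most four times on the whole
branch. Every vertex of one branch is therefore paired with at most four vertices of the other
in the indistinct set, and `c = 4` works.
-/

open SimpleGraph

variable {V : Type*}

open Finset

def NoLocalMinOn (f : ℕ → ℕ) (a b : ℕ) : Prop :=
  ∀ i, a < i → i < b → f (i - 1) < f i ∨ f (i + 1) < f i

namespace NoLocalMinOn

variable {f : ℕ → ℕ} {a b : ℕ}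

/-- A minimiser of `f` on `(i, l)` would be an interior weak local minimum. -/
theorem lt_or_lt (h : NoLocalMinOn f a b) {i j l : ℕ} (hai : a ≤ i) (hij : i < j) (hjl : j < l) (hlb : l ≤ b) :
    f i < f j ∨ f l < f j := by
  by_contra! hle
  obtain ⟨m, hm, hmin⟩ := (Ioo i l).exists_min_image f ⟨j, mem_Ioo.2 ⟨hij, hjl⟩⟩
  rw [mem_Ioo] at hm
  have hmj := hmin j (mem_Ioo.2 ⟨hij, hjl⟩)
  have hlow : ∀ x, i ≤ x → x ≤ l → f m ≤ f x := by
    intro x hix hxl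
    rcases hix.eq_or_lt with rfl | hix
    · omega
    rcases hxl.eq_or_lt with rfl | hxl
    · omega
    exact hmin x (mem_Ioo.2 ⟨hix, hxl⟩)
  have := hlow (m - 1) (by omega) (by omega)
  have := hlow (m + 1) (by omega) (by omega)
  have := h m (by omega) (by omega)
  omega

theorem card_filter_Icc_eq_le_two (h : NoLocalMinOn f a b) (k : ℕ) :
    #{i ∈ Icc a b | f i = k} ≤ 2 := by
  generalize hS : {i ∈ Icc a b | f i = k} = S
  have mem : ∀ i ∈ S, a ≤ i ∧ i ≤ b ∧ f i = k := by
    rw [← hS]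
    intro i hi
    rw [mem_filter, mem_Icc] at hi
    exact ⟨hi.1.1, hi.1.2, hi.2⟩
  rcases S.eq_empty_or_nonempty with rfl | hne
  · simp
  refine (card_le_card fun i hi => ?_).trans (card_le_two (a := S.min' hne) (b := S.max' hne))
  have hlo := S.min'_le i hi
  have hhi := S.le_max' i hi
  have hmin := mem _ (S.min'_mem hne)
  have hmax := mem _ (S.max'_mem hne)
  have hi := mem i hi
  rw [mem_insert, mem_singleton]
  by_contra! hne
  have := h.lt_or_lt hmin.1 (lt_of_le_of_ne hlo hne.1.symm)
    (lt_of_le_of_ne hhi hne.2) hmax.2.1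
  omega

end NoLocalMinOn

theorem Set.ncard_le_mul_ncard_of_mapsTo {α β : Type*} {s : Set α} {t : Set β} {f : α → β}
    (hs : s.Finite) (ht : t.Finite) (hf : Set.MapsTo f s t) (n : ℕ)
    (hn : ∀ b ∈ t, (s ∩ f ⁻¹' {b}).ncard ≤ n) : s.ncard ≤ n * t.ncard := by
  classical
  rw [Set.ncard_eq_toFinset_card s hs, Set.ncard_eq_toFinset_card t ht]
  refine card_le_mul_card_image_of_maps_to (fun a ha => by simpa using hf (by simpa using ha)) n
    fun b hb => ?_
  convert hn b (by simpa using hb) using 1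
  rw [← Set.ncard_coe_finset]
  congr 1
  ext a
  simp

namespace SimpleGraph

theorem Reachable.exists_adj_dist_lt {G : SimpleGraph V} {s x : V} (h : G.Reachable x s)
    (hx : x ≠ s) : ∃ y, G.Adj x y ∧ G.dist s y < G.dist s x := by
  obtain ⟨p, hp⟩ := h.exists_walk_length_eq_dist
  cases p with
  | nil => exact absurd rfl hx
  | @cons _ y _ hadj q =>
    refine ⟨y, hadj, ?_⟩
    have : G.dist y s ≤ q.length := dist_le q
    rw [dist_comm, dist_comm (u := s)]
    simp only [Walk.length_cons] at hp
    omega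

end SimpleGraph

namespace IsBranchLike

variable {G : SimpleGraph V} {u v : V} {W : G.Walk u v} {i : ℕ}

theorem getVert_injOn (hW : IsBranchLike G W) : Set.InjOn W.getVert (Set.Ioo 0 W.length) := by
  rcases hW.1 with hp | ⟨rfl, hc⟩
  · exact hp.getVert_injOn.mono fun i hi => (Set.mem_Ioo.1 hi).2.le
  · rw [Walk.copy_rfl_rfl] at hc
    refine hc.getVert_injOn.mono fun i hi => ?_
    rw [Set.mem_Ioo] at hi
    exact ⟨hi.1, hi.2.le⟩

theorem getVert_ne_start (hW : IsBranchLike G W) (h0 : 0 < i) (hi : i < W.length) :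
    W.getVert i ≠ u := by
  rcases hW.1 with hp | ⟨rfl, hc⟩
  · exact (hp.getVert_eq_start_iff hi.le).not.2 h0.ne'
  · rw [Walk.copy_rfl_rfl] at hc
    rw [Ne, hc.getVert_endpoint_iff hi.le]
    omega

theorem getVert_ne_end (hW : IsBranchLike G W) (h0 : 0 < i) (hi : i < W.length) :
    W.getVert i ≠ v := by
  rcases hW.1 with hp | ⟨rfl, hc⟩
  · exact (hp.getVert_eq_end_iff hi.le).not.2 hi.ne
  · exact hW.getVert_ne_start h0 hi

theorem toSubgraph_neighborSet_getVert (hW : IsBranchLike G W) (h0 : 0 < i)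
    (hi : i < W.length) :
    W.toSubgraph.neighborSet (W.getVert i) = {W.getVert (i - 1), W.getVert (i + 1)} := by
  rcases hW.1 with hp | ⟨rfl, hc⟩
  · exact hp.neighborSet_toSubgraph_internal h0.ne' hi
  · exact hc.neighborSet_toSubgraph_internal h0.ne' hi

theorem ncard_toSubgraph_neighborSet_getVert (hW : IsBranchLike G W) (h0 : 0 < i)
    (hi : i < W.length) : (W.toSubgraph.neighborSet (W.getVert i)).ncard = 2 := by
  rcases hW.1 with hp | ⟨rfl, hc⟩
  · exact hp.ncard_neighborSet_toSubgraph_internal_eq_two h0.ne' hi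
  · exact hc.ncard_neighborSet_toSubgraph_eq_two (W.getVert_mem_support i)

theorem neighborSet_getVert (hW : IsBranchLike G W) (h0 : 0 < i) (hi : i < W.length) :
    G.neighborSet (W.getVert i) = {W.getVert (i - 1), W.getVert (i + 1)} := by
  have hdeg : (G.neighborSet (W.getVert i)).ncard = 2 :=
    hW.2 _ (W.getVert_mem_support i) (hW.getVert_ne_start h0 hi) (hW.getVert_ne_end h0 hi)
  rw [← hW.toSubgraph_neighborSet_getVert h0 hi]
  refine (Set.eq_of_subset_of_ncard_le (W.toSubgraph.neighborSet_subset _) ?_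
    (Set.finite_of_ncard_pos (by omega))).symm
  rw [hdeg, hW.ncard_toSubgraph_neighborSet_getVert h0 hi]

theorem dist_getVert_pred_lt_or_dist_getVert_succ_lt (hW : IsBranchLike G W)
    (hG : G.Connected) {s : V} (h0 : 0 < i) (hi : i < W.length) (hs : W.getVert i ≠ s) :
    G.dist s (W.getVert (i - 1)) < G.dist s (W.getVert i) ∨
      G.dist s (W.getVert (i + 1)) < G.dist s (W.getVert i) := by
  obtain ⟨y, hadj, hlt⟩ := (hG.preconnected _ s).exists_adj_dist_lt hs
  have hy : y ∈ G.neighborSet (W.getVert i) := hadj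
  rw [hW.neighborSet_getVert h0 hi] at hy
  rcases hy with rfl | rfl
  exacts [Or.inl hlt, Or.inr hlt]

theorem exists_forall_getVert_ne (hW : IsBranchLike G W) (s : V) :
    ∃ t ≤ W.length, ∀ i, 0 < i → i < W.length → i ≠ t → W.getVert i ≠ s := by
  by_cases hs : ∃ t ∈ Set.Ioo 0 W.length, W.getVert t = s
  · obtain ⟨t, ht, rfl⟩ := hs
    exact ⟨t, ht.2.le, fun i h0 hi hit heq => hit (hW.getVert_injOn ⟨h0, hi⟩ ht heq)⟩
  · push Not at hs
    exact ⟨0, Nat.zero_le _, fun i h0 hi _ => hs i ⟨h0, hi⟩⟩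

theorem ncard_dist_eq_le_four (hW : IsBranchLike G W) (hG : G.Connected) (s : V) (k : ℕ) :
    {x | x ∈ W.support ∧ G.dist s x = k}.ncard ≤ 4 := by
  classical
  set f : ℕ → ℕ := fun i => G.dist s (W.getVert i)
  obtain ⟨t, ht, hts⟩ := hW.exists_forall_getVert_ne s
  have hf : ∀ i, 0 < i → i < W.length → i ≠ t → f (i - 1) < f i ∨ f (i + 1) < f i :=
    fun i h0 hi hit => hW.dist_getVert_pred_lt_or_dist_getVert_succ_lt hG h0 hi (hts i h0 hi hit)
  have hsplit : {i ∈ Icc 0 W.length | f i = k} ⊆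
      {i ∈ Icc 0 t | f i = k} ∪ {i ∈ Icc t W.length | f i = k} := by
    intro i
    simp only [mem_union, mem_filter, mem_Icc]
    omega
  have hlevel : #{i ∈ Icc 0 W.length | f i = k} ≤ 4 :=
    calc _ ≤ _ := card_le_card hsplit
      _ ≤ _ := card_union_le _ _
      _ ≤ 2 + 2 := add_le_add
        (NoLocalMinOn.card_filter_Icc_eq_le_two (fun i h0 hit => hf i h0 (by omega) hit.ne) k)
        (NoLocalMinOn.card_filter_Icc_eq_le_two (fun i hti hi => hf i (by omega) hi hti.ne') k)
  have hsub : {x | x ∈ W.support ∧ G.dist s x = k} ⊆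
      ({i ∈ Icc 0 W.length | f i = k}.image W.getVert : Finset V) := by
    rintro x ⟨hx, rfl⟩
    obtain ⟨i, rfl, hi⟩ := W.mem_support_iff_exists_getVert.1 hx
    simp only [coe_image, coe_filter, mem_Icc]
    exact ⟨i, ⟨⟨Nat.zero_le i, hi⟩, rfl⟩, rfl⟩
  calc _ ≤ _ := Set.ncard_le_ncard hsub (finite_toSet _)
    _ = _ := Set.ncard_coe_finset _
    _ ≤ _ := card_image_le
    _ ≤ 4 := hlevel

end IsBranchLike

section Indistinct

variable {G : SimpleGraph V} {a₁ a₂ b₁ b₂ : V} {A : G.Walk a₁ a₂} {B : G.Walk b₁ b₂}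

theorem finite_indistinctSet (s : V) : (indistinctSet G s A B).Finite :=
  (A.support.finite_toSet.prod B.support.finite_toSet).subset fun _ hp => ⟨hp.1, hp.2.1⟩

theorem ncard_indistinctSet_le_right (hG : G.Connected) (hA : IsBranchLike G A) (s : V) :
    (indistinctSet G s A B).ncard ≤ 4 * {x | x ∈ B.support}.ncard := by
  refine Set.ncard_le_mul_ncard_of_mapsTo (finite_indistinctSet s) B.support.finite_toSet
    (fun p hp => hp.2.1) 4 fun b _ => ?_
  refine (Set.ncard_le_ncard_of_injOn Prod.fst ?_ ?_
    (A.support.finite_toSet.subset fun _ hx => hx.1)).trans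
    (hA.ncard_dist_eq_le_four hG s (G.dist s b))
  · rintro ⟨a, b'⟩ ⟨⟨ha, -, -, hd⟩, rfl⟩
    exact ⟨ha, hd⟩
  · rintro ⟨a, b'⟩ ⟨-, rfl⟩ ⟨a', b''⟩ ⟨-, hb⟩ rfl
    simp_all

theorem ncard_indistinctSet_le_left (hG : G.Connected) (hB : IsBranchLike G B) (s : V) :
    (indistinctSet G s A B).ncard ≤ 4 * {x | x ∈ A.support}.ncard := by
  refine Set.ncard_le_mul_ncard_of_mapsTo (finite_indistinctSet s) A.support.finite_toSet
    (fun p hp => hp.1) 4 fun a _ => ?_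
  refine (Set.ncard_le_ncard_of_injOn Prod.snd ?_ ?_
    (B.support.finite_toSet.subset fun _ hx => hx.1)).trans
    (hB.ncard_dist_eq_le_four hG s (G.dist s a))
  · rintro ⟨a', b⟩ ⟨⟨-, hb, -, hd⟩, rfl⟩
    exact ⟨hb, hd.symm⟩
  · rintro ⟨a', b⟩ ⟨-, rfl⟩ ⟨a'', b'⟩ ⟨-, ha⟩ rfl
    simp_all

end Indistinct

/-- There is a constant `c > 0` such that for every connected finite graph `G`,
branches `A` and `B` of `G` (possibly equal), and vertex `s`, the indistinct
set for `s`, `A`, `B` has at most `c * min |A| |B|` elements. -/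
theorem indistinctSet_card_bound :
    ∃ c : ℕ, 0 < c ∧ ∀ (V : Type) [Fintype V] (G : SimpleGraph V),
      G.Connected → ∀ (a₁ a₂ b₁ b₂ : V) (A : G.Walk a₁ a₂) (B : G.Walk b₁ b₂),
      IsBranch G A → IsBranch G B → ∀ s : V,
      (indistinctSet G s A B).ncard ≤
        c * min {x : V | x ∈ A.support}.ncard {x : V | x ∈ B.support}.ncard := by
  refine ⟨4, by norm_num, fun V _ G hG a₁ a₂ b₁ b₂ A B hA hB s => ?_⟩
  rw [mul_min]
  exact le_min (ncard_indistinctSet_le_left hG hB.1 s) (ncard_indistinctSet_le_right hG hA.1 s)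
end
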